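/- arXiv:1410.3785 — 3 statements merged into one kernel-verified Lean document; each statement's English description precedes it below -/
import Mathlib

section
/- Let D be a domain (nonempty connected open set) in ℂⁿ and let u : D → ℝ be a continuous plurisubharmonic function which is non-negative and maximal. Assume that the zero set u⁻¹(0) ⊆ D is non-empty and convex. Then every point x of u⁻¹(0) lies in the relative interior of a complex one-dimensional convex set contained in u⁻¹(0); i.e., there exists a convex set C ⊆ u⁻¹(0) whose affine hull over ℝ is a set of the form p + ℂ·v with v ≠ 0, such that x belongs to the relative interior of C. -/
/-!
Fix `x` in the zero set `Z` and a closed ball `closedBall x r ⊆ D`. If `Z` contains a cross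
`x ± v, x ± i v` with `v ≠ 0`, convexity puts the complex disc `x + {c • v : ‖c‖ < 1/2}` inside
`Z`, and `x` is in its relative interior.

Otherwise `K = (Z ∩ closedBall x r) - x` is a compact convex set through `0` containing no cross,
and a holomorphic `F` with `F 0 = 0` and `re F < 0` on `K ∩ sphere 0 r` is built by induction on
`dim (span ℝ K)`. If `span ℝ K` is totally real, some complex functional `f` is purely imaginary
on it and nonzero on `K`, and `p = f ^ 2` has nonpositive real part on `K`. If not, `0` lies on
the relative boundary of `K` (a relative neighbourhood would contain a cross), and a supporting
functional `ℓ ≤ 0` gives `p = A f + f ^ 2` with `f` the complexification of `ℓ`. In both cases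
`re p ≤ 0` on `K` with zeros only on the face `K ∩ ker f` of smaller dimension, and by
compactness a large multiple of `p` plus the barrier of the face is a barrier for `K`.

Since `re F(· - x)` is pluriharmonic and negative where `u` vanishes on the sphere, compactness
gives `C, δ > 0` with `(re F(· - x) + δ) / C ≤ u` there, and maximality yields
`δ / C ≤ u x = 0`, a contradiction.
-/

open MeasureTheory

noncomputable section

/-- A (continuous) function `u` satisfies the circle sub-mean-value property on `D`:
for continuous functions this characterizes plurisubharmonicity. -/
def IsPshOn {E : Type*} [NormedAddCommGroup E] [NormedSpace ℂ E]
    (D : Set E) (u : E → ℝ) : Prop :=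
  ∀ (a b : E) (r : ℝ), 0 < r → (∀ c : ℂ, ‖c‖ ≤ r → a + c • b ∈ D) →
    u a ≤ (1 / (2 * Real.pi)) *
      ∫ θ in (0:ℝ)..(2 * Real.pi), u (a + ((r : ℂ) * Complex.exp ((θ : ℂ) * Complex.I)) • b)

/-- `u` is a maximal plurisubharmonic function on `D`. -/
def IsMaximalPshOn {E : Type*} [NormedAddCommGroup E] [NormedSpace ℂ E]
    (D : Set E) (u : E → ℝ) : Prop :=
  ∀ G : Set E, IsOpen G → IsCompact (closure G) → closure G ⊆ D →
    ∀ v : E → ℝ, UpperSemicontinuousOn v (closure G) → IsPshOn G v →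
      (∀ z ∈ frontier G, v z ≤ u z) → ∀ z ∈ G, v z ≤ u z

open Metric Set Module Submodule

theorem IsCompact.exists_mul_add_lt_zero {X : Type*} [TopologicalSpace X] [T2Space X]
    {s : Set X} (hs : IsCompact s) {g h : X → ℝ} (hg : ContinuousOn g s) (hh : ContinuousOn h s)
    (hg_nonpos : ∀ x ∈ s, g x ≤ 0) (hh_neg : ∀ x ∈ s, g x = 0 → h x < 0) :
    ∃ C > 0, ∀ x ∈ s, C * g x + h x < 0 := by
  let t : ℕ → Set X := fun n => s ∩ (fun x => (n + 1 : ℝ) * g x + h x) ⁻¹' Ici 0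
  have ht_closed (n : ℕ) : IsClosed (t n) :=
    ((continuousOn_const.mul hg).add hh).preimage_isClosed_of_isClosed hs.isClosed isClosed_Ici
  have ht_anti : Antitone t := by
    intro m n hmn x ⟨hx, hxn⟩
    have : (m + 1 : ℝ) ≤ n + 1 := by exact_mod_cast Nat.succ_le_succ hmn
    exact ⟨hx, by simp only [mem_preimage, mem_Ici] at hxn ⊢; nlinarith [hg_nonpos x hx]⟩
  have ht_empty : s ∩ ⋂ n, t n = ∅ := by
    refine eq_empty_of_forall_notMem fun x ⟨hx, hxt⟩ => ?_
    have hxt (n : ℕ) : 0 ≤ (n + 1 : ℝ) * g x + h x := (mem_iInter.mp hxt n).2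
    rcases (hg_nonpos x hx).lt_or_eq with hneg | hzero
    · obtain ⟨n, hn⟩ := exists_nat_gt (h x / -g x)
      have := hxt n
      rw [div_lt_iff₀ (neg_pos.mpr hneg)] at hn
      nlinarith
    · exact (hh_neg x hx hzero).not_ge (by simpa [hzero] using hxt 0)
  obtain ⟨n, hn⟩ := hs.elim_directed_family_closed t ht_closed ht_empty ht_anti.directed_ge
  exact ⟨n + 1, by positivity, fun x hx => not_le.mp fun hx' => hn.subset ⟨hx, hx, hx'⟩⟩

section Holomorphic

variable {V : Type*} [NormedAddCommGroup V] [NormedSpace ℂ V]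

theorem DifferentiableOn.isPshOn_re {D : Set V} {F : V → ℂ} (hF : DifferentiableOn ℂ F D) :
    IsPshOn D (fun z => (F z).re) := by
  intro a b r hr hdisc
  set P : ℂ → ℂ := fun c => F (a + c • b)
  have hP : DifferentiableOn ℂ P (closedBall 0 r) :=
    hF.comp (by fun_prop) fun c hc => hdisc c (by simpa using hc)
  have hmean : Real.circleAverage P 0 r = F a := by
    have h := (hP.diffContOnCl_ball (by rw [abs_of_pos hr])).circleAverage
    rwa [show P 0 = F a by simp [P]] at h
  have hmean_re : Real.circleAverage (fun c => (P c).re) 0 r = (F a).re := by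
    rw [← hmean]
    exact Complex.reCLM.circleAverage_comp_comm
      (hP.continuousOn.mono sphere_subset_closedBall |>.circleIntegrable hr.le)
  refine le_of_eq ?_
  simpa [Real.circleAverage_def, circleMap, P] using hmean_re.symm

theorem IsMaximalPshOn.re_le_of_forall_sphere [ProperSpace V] {D : Set V} {u : V → ℝ}
    (hu : IsMaximalPshOn D u) {x : V} {r : ℝ} (hr : 0 < r) (hrD : closedBall x r ⊆ D)
    {G : V → ℂ} (hG : Differentiable ℂ G) (hle : ∀ z ∈ sphere x r, (G z).re ≤ u z) :
    (G x).re ≤ u x := by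
  have hcl : closure (ball x r) = closedBall x r := closure_ball x hr.ne'
  exact hu (ball x r) isOpen_ball (hcl ▸ isCompact_closedBall x r) (hcl ▸ hrD) _
    ((Complex.continuous_re.comp hG.continuous).upperSemicontinuous.upperSemicontinuousOn _)
    hG.differentiableOn.isPshOn_re (by rwa [frontier_ball x hr.ne']) x (mem_ball_self hr)

theorem IsMaximalPshOn.pos_of_re_neg [ProperSpace V] {D : Set V} {u : V → ℝ}
    (hu : IsMaximalPshOn D u) {x : V} {r : ℝ} (hr : 0 < r) (hrD : closedBall x r ⊆ D)
    (hu_cont : ContinuousOn u (sphere x r)) (hu_nonneg : ∀ z ∈ sphere x r, 0 ≤ u z)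
    {F : V → ℂ} (hF : Differentiable ℂ F) (hFx : F x = 0)
    (hFneg : ∀ z ∈ sphere x r, u z = 0 → (F z).re < 0) : 0 < u x := by
  have hFc : Continuous fun z => (F z).re := Complex.continuous_re.comp hF.continuous
  obtain ⟨C, hC, hCF⟩ := (isCompact_sphere x r).exists_mul_add_lt_zero (g := fun z => -u z)
    hu_cont.neg hFc.continuousOn (fun z hz => neg_nonpos.mpr (hu_nonneg z hz))
    (fun z hz hz0 => hFneg z hz (neg_eq_zero.mp hz0))
  obtain ⟨δ, hδ, hδF⟩ := (isCompact_sphere x r).exists_forall_le'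
    (f := fun z => C * u z - (F z).re) ((continuousOn_const.mul hu_cont).sub hFc.continuousOn)
    (a := 0) (fun z hz => by linarith [hCF z hz])
  have hmax := hu.re_le_of_forall_sphere hr hrD
    (G := fun z => ((C⁻¹ : ℝ) : ℂ) * (F z + δ)) (by fun_prop) fun z hz => by
      rw [Complex.re_ofReal_mul, Complex.add_re, Complex.ofReal_re, inv_mul_le_iff₀ hC]
      linarith [hδF z hz]
  rw [Complex.re_ofReal_mul, Complex.add_re, hFx, Complex.ofReal_re, Complex.zero_re,
    zero_add] at hmax
  exact (by positivity : 0 < C⁻¹ * δ).trans_le hmax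

end Holomorphic

theorem Convex.exists_nonpos_of_zero_notMem_interior {E : Type*} [NormedAddCommGroup E]
    [NormedSpace ℝ E] {K : Set E} (hK : Convex ℝ K) (hint : (interior K).Nonempty)
    (h0 : (0 : E) ∉ interior K) :
    ∃ ℓ : StrongDual ℝ E, (∀ z ∈ K, ℓ z ≤ 0) ∧ ∃ z₀ ∈ K, ℓ z₀ < 0 := by
  obtain ⟨ℓ, hℓ⟩ := geometric_hahn_banach_open_point hK.interior isOpen_interior h0
  simp only [map_zero] at hℓ
  obtain ⟨z₀, hz₀⟩ := hint
  refine ⟨ℓ, fun z hz => ?_, z₀, interior_subset hz₀, hℓ z₀ hz₀⟩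
  have hK_sub : K ⊆ closure (interior K) :=
    hK.closure_interior_eq_closure_of_nonempty_interior ⟨z₀, hz₀⟩ ▸ subset_closure
  exact closure_minimal (fun y hy => (hℓ y hy).le) (isClosed_Iic.preimage ℓ.continuous) (hK_sub hz)

theorem finrank_span_inter_lt {k V : Type*} [DivisionRing k] [AddCommGroup V] [Module k V]
    [FiniteDimensional k V] {K : Set V} {N : Submodule k V} {z₀ : V} (hz₀ : z₀ ∈ K)
    (hz₀N : z₀ ∉ N) : finrank k (span k (K ∩ N)) < finrank k (span k K) := by
  refine Submodule.finrank_lt_finrank_of_lt (lt_of_le_of_ne (span_mono inter_subset_left) ?_)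
  intro h
  exact hz₀N (span_le.mpr inter_subset_right (h ▸ subset_span hz₀))

section Barrier

variable {V : Type*} [NormedAddCommGroup V] [NormedSpace ℂ V]

def Submodule.IsTotallyReal (E : Submodule ℝ V) : Prop :=
  ∀ w ∈ E, Complex.I • w ∈ E → w = 0

theorem StrongDual.re_extendRCLike (ℓ : StrongDual ℝ V) (z : V) :
    (ℓ.extendRCLike z : ℂ).re = ℓ z := by
  simp [StrongDual.extendRCLike_apply]

theorem StrongDual.re_extendRCLike_sq (ℓ : StrongDual ℝ V) (z : V) :
    ((ℓ.extendRCLike z : ℂ) ^ 2).re = ℓ z ^ 2 - ℓ (Complex.I • z) ^ 2 := by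
  simp [sq, StrongDual.extendRCLike_apply]

theorem StrongDual.extendRCLike_eq_zero_iff (ℓ : StrongDual ℝ V) (z : V) :
    (ℓ.extendRCLike z : ℂ) = 0 ↔ ℓ z = 0 ∧ ℓ (Complex.I • z) = 0 := by
  simp [Complex.ext_iff, StrongDual.extendRCLike_apply]

variable [FiniteDimensional ℂ V]

theorem exists_nonpos_functional_of_not_isTotallyReal {K : Set V} (hconv : Convex ℝ K)
    (h0 : 0 ∈ K) (hcross : ∀ v, v ∈ K → -v ∈ K → Complex.I • v ∈ K → -(Complex.I • v) ∈ K → v = 0)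
    (hK : ¬ (span ℝ K).IsTotallyReal) :
    ∃ ℓ : StrongDual ℝ V, (∀ z ∈ K, ℓ z ≤ 0) ∧ ∃ z₀ ∈ K, ℓ z₀ < 0 := by
  set E := span ℝ K
  set KE : Set E := (↑) ⁻¹' K
  have hKE : Convex ℝ KE := hconv.linear_preimage E.subtype
  have h0E : (0 : E) ∈ KE := h0
  have hint : (interior KE).Nonempty := by
    rw [hKE.interior_nonempty_iff_affineSpan_eq_top,
      AffineSubspace.affineSpan_eq_top_iff_vectorSpan_eq_top_of_nonempty _ _ _ ⟨0, h0E⟩,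
      vectorSpan_eq_span_vsub_set_right ℝ h0E]
    simp [KE, E]
  have h0int : (0 : E) ∉ interior KE := by
    intro h
    obtain ⟨δ, hδ, hball⟩ := Metric.mem_nhds_iff.mp (mem_interior_iff_mem_nhds.mp h)
    have hsmall : ∀ z ∈ E, ‖z‖ < δ → z ∈ K := fun z hz hzδ =>
      hball (show (⟨z, hz⟩ : E) ∈ ball 0 δ by simpa using hzδ)
    obtain ⟨w, hwE, hIwE, hw⟩ : ∃ w ∈ E, Complex.I • w ∈ E ∧ w ≠ 0 := by
      simpa [Submodule.IsTotallyReal] using hK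
    set t : ℝ := δ / (2 * ‖w‖)
    have ht : 0 < t := by positivity
    have htw : ‖t • w‖ < δ := by
      have : t * ‖w‖ = δ / 2 := by
        simp only [t]; field_simp [norm_ne_zero_iff.mpr hw]
      rw [norm_smul, Real.norm_of_nonneg ht.le, this]
      linarith
    have hIt : ‖Complex.I • t • w‖ < δ := by rwa [norm_smul, Complex.norm_I, one_mul]
    have htwE : t • w ∈ E := E.smul_mem t hwE
    have hItwE : Complex.I • t • w ∈ E := smul_comm t Complex.I w ▸ E.smul_mem t hIwE
    refine smul_ne_zero ht.ne' hw (hcross _ (hsmall _ htwE htw) ?_ (hsmall _ hItwE hIt) ?_)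
    · exact hsmall _ (E.neg_mem htwE) (by rwa [norm_neg])
    · exact hsmall _ (E.neg_mem hItwE) (by rwa [norm_neg])
  obtain ⟨ℓE, hℓE, z₀, hz₀, hℓz₀⟩ := hKE.exists_nonpos_of_zero_notMem_interior hint h0int
  obtain ⟨ℓ, hℓ, -⟩ := exists_extension_norm_eq E ℓE
  exact ⟨ℓ, fun z hz => hℓ ⟨z, subset_span hz⟩ ▸ hℓE _ hz, z₀, hz₀, hℓ z₀ ▸ hℓz₀⟩

theorem exists_vanishing_functional_of_isTotallyReal {K : Set V} (hK : (span ℝ K).IsTotallyReal)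
    {z₀ : V} (hz₀ : z₀ ∈ K) (hz₀0 : z₀ ≠ 0) :
    ∃ μ : StrongDual ℝ V, (∀ z ∈ K, μ z = 0) ∧ μ (Complex.I • z₀) ≠ 0 := by
  have hIz₀ : Complex.I • z₀ ∉ span ℝ K := fun h => hz₀0 (hK z₀ (subset_span hz₀) h)
  obtain ⟨μ, hμz₀, hμK⟩ := Submodule.exists_le_ker_of_notMem hIz₀
  exact ⟨LinearMap.toContinuousLinearMap μ, fun z hz => hμK (subset_span hz), hμz₀⟩

theorem exists_holomorphic_re_nonpos_with_zeros_in_ker {K : Set V} (hK : IsCompact K)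
    (hconv : Convex ℝ K) (h0 : 0 ∈ K)
    (hcross : ∀ v, v ∈ K → -v ∈ K → Complex.I • v ∈ K → -(Complex.I • v) ∈ K → v = 0)
    {z₀ : V} (hz₀ : z₀ ∈ K) (hz₀0 : z₀ ≠ 0) :
    ∃ f : StrongDual ℂ V, (∃ z ∈ K, f z ≠ 0) ∧ ∃ p : V → ℂ, Differentiable ℂ p ∧ p 0 = 0 ∧
      ∀ z ∈ K, (p z).re ≤ 0 ∧ ((p z).re = 0 → f z = 0) := by
  by_cases hTR : (span ℝ K).IsTotallyReal
  · obtain ⟨μ, hμK, hμz₀⟩ := exists_vanishing_functional_of_isTotallyReal hTR hz₀ hz₀0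
    refine ⟨μ.extendRCLike, ⟨z₀, hz₀, by simp [μ.extendRCLike_eq_zero_iff, hμz₀]⟩,
      fun z => μ.extendRCLike z ^ 2, by fun_prop, by simp, fun z hz => ?_⟩
    rw [μ.re_extendRCLike_sq, μ.extendRCLike_eq_zero_iff, hμK z hz]
    exact ⟨by nlinarith, fun h => ⟨rfl, by nlinarith⟩⟩
  · obtain ⟨ℓ, hℓK, z₁, hz₁, hℓz₁⟩ :=
      exists_nonpos_functional_of_not_isTotallyReal hconv h0 hcross hTR
    obtain ⟨M, hM⟩ := hK.exists_bound_of_continuousOn ℓ.continuous.continuousOn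
    have hMℓ : ∀ z ∈ K, 0 < M + 1 + ℓ z := fun z hz => by
      linarith [neg_le_of_abs_le (hM z hz)]
    refine ⟨ℓ.extendRCLike, ⟨z₁, hz₁, by simp [ℓ.extendRCLike_eq_zero_iff, hℓz₁.ne]⟩,
      fun z => ((M + 1 : ℝ) : ℂ) * ℓ.extendRCLike z + ℓ.extendRCLike z ^ 2, by fun_prop, by simp,
      fun z hz => ?_⟩
    have hre : (((M + 1 : ℝ) : ℂ) * ℓ.extendRCLike z + ℓ.extendRCLike z ^ 2).re
        = ℓ z * (M + 1 + ℓ z) - ℓ (Complex.I • z) ^ 2 := by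
      rw [Complex.add_re, ℓ.re_extendRCLike_sq, Complex.re_ofReal_mul, ℓ.re_extendRCLike]
      ring
    rw [hre, ℓ.extendRCLike_eq_zero_iff]
    have h1 := hℓK z hz
    have h2 := hMℓ z hz
    refine ⟨by nlinarith [sq_nonneg (ℓ (Complex.I • z))], fun h => ?_⟩
    have h3 : ℓ z * (M + 1 + ℓ z) = 0 := by nlinarith [sq_nonneg (ℓ (Complex.I • z))]
    have h4 : ℓ z = 0 := (mul_eq_zero.mp h3).resolve_right h2.ne'
    exact ⟨h4, by nlinarith⟩

theorem exists_holomorphic_barrier {K S : Set V} (hK : IsCompact K) (hconv : Convex ℝ K)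
    (h0 : 0 ∈ K)
    (hcross : ∀ v, v ∈ K → -v ∈ K → Complex.I • v ∈ K → -(Complex.I • v) ∈ K → v = 0)
    (hS : IsClosed S) (h0S : (0 : V) ∉ S) :
    ∃ F : V → ℂ, Differentiable ℂ F ∧ F 0 = 0 ∧ ∀ z ∈ K ∩ S, (F z).re < 0 := by
  induction hd : finrank ℝ (span ℝ K) using Nat.strong_induction_on generalizing K with
  | _ d ih =>
  by_cases hK0 : ∃ z₀ ∈ K, z₀ ≠ 0
  swap
  · refine ⟨0, differentiable_const 0, rfl, fun z hz => (h0S ?_).elim⟩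
    exact of_not_not (fun h => hK0 ⟨z, hz.1, h⟩) ▸ hz.2
  obtain ⟨z₀, hz₀, hz₀0⟩ := hK0
  obtain ⟨f, ⟨z₁, hz₁, hfz₁⟩, p, hp, hp0, hpK⟩ :=
    exists_holomorphic_re_nonpos_with_zeros_in_ker hK hconv h0 hcross hz₀ hz₀0
  set N := LinearMap.ker ((f : V →ₗ[ℂ] ℂ).restrictScalars ℝ)
  have hmemN : ∀ z, z ∈ N ↔ f z = 0 := fun z => LinearMap.mem_ker
  obtain ⟨F', hF', hF'0, hF'neg⟩ :=
    ih _ (hd ▸ finrank_span_inter_lt hz₁ fun h => hfz₁ ((hmemN z₁).mp h))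
      (hK.inter_right N.closed_of_finiteDimensional) (hconv.inter N.convex) ⟨h0, N.zero_mem⟩
      (fun v h1 h2 h3 h4 => hcross v h1.1 h2.1 h3.1 h4.1) rfl
  obtain ⟨C, -, hC⟩ := (hK.inter_right hS).exists_mul_add_lt_zero
    (g := fun z => (p z).re) (h := fun z => (F' z).re)
    (Complex.continuous_re.comp hp.continuous).continuousOn
    (Complex.continuous_re.comp hF'.continuous).continuousOn
    (fun z hz => (hpK z hz.1).1)
    (fun z hz hpz => hF'neg z ⟨⟨hz.1, (hmemN z).mpr ((hpK z hz.1).2 hpz)⟩, hz.2⟩)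
  exact ⟨fun z => C * p z + F' z, by fun_prop, by simp [hp0, hF'0],
    fun z hz => by simpa using hC z hz⟩

theorem exists_holomorphic_barrier_at {Z : Set V} (hZ : Convex ℝ Z) {x : V} (hx : x ∈ Z)
    {r : ℝ} (hr : 0 < r) (hZr : IsCompact (Z ∩ closedBall x r))
    (hcross : ∀ v, x + v ∈ Z → x - v ∈ Z → x + Complex.I • v ∈ Z → x - Complex.I • v ∈ Z →
      v = 0) :
    ∃ F : V → ℂ, Differentiable ℂ F ∧ F x = 0 ∧ ∀ z ∈ Z ∩ sphere x r, (F z).re < 0 := by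
  set K := (x + ·) ⁻¹' (Z ∩ closedBall x r)
  have hmemK : ∀ v, v ∈ K ↔ x + v ∈ Z ∧ ‖v‖ ≤ r := fun v => by simp [K]
  obtain ⟨F, hF, hF0, hFneg⟩ := exists_holomorphic_barrier (K := K) (S := sphere 0 r)
    ((Homeomorph.addLeft x).isCompact_preimage.mpr hZr)
    ((hZ.inter (convex_closedBall x r)).translate_preimage_right x)
    (by simp [K, hx, hr.le])
    (fun v h1 h2 h3 h4 => hcross v ((hmemK v).mp h1).1
      (by simpa [sub_eq_add_neg] using ((hmemK _).mp h2).1) ((hmemK _).mp h3).1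
      (by simpa [sub_eq_add_neg] using ((hmemK _).mp h4).1))
    isClosed_sphere (by simp [hr.ne])
  refine ⟨fun z => F (z - x), by fun_prop, by simpa using hF0, fun z ⟨hzZ, hzr⟩ => hFneg _ ⟨?_, ?_⟩⟩
  · rw [hmemK]; exact ⟨by simpa using hzZ, (mem_sphere_iff_norm.mp hzr).le⟩
  · simpa using mem_sphere_iff_norm.mp hzr

end Barrier

theorem Complex.ball_subset_of_convex {T : Set ℂ} (hT : Convex ℝ T) {ρ : ℝ} (hρ : 0 < ρ)
    (h1 : (ρ : ℂ) ∈ T) (h2 : -(ρ : ℂ) ∈ T) (h3 : ρ * Complex.I ∈ T)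
    (h4 : -(ρ * Complex.I) ∈ T) : ball (0 : ℂ) (ρ / 2) ⊆ T := by
  have hseg : ∀ a : ℂ, a ∈ T → -a ∈ T → ∀ t : ℝ, |t| ≤ 1 → (t : ℂ) * a ∈ T := by
    intro a ha ha' t ht
    have h := hT ha ha' (a := (1 + t) / 2) (b := (1 - t) / 2)
      (by linarith [neg_abs_le t]) (by linarith [le_abs_self t]) (by ring)
    convert h using 1
    simp only [Complex.real_smul]; push_cast; ring
  intro c hc
  have hc' : ‖c‖ < ρ / 2 := by simpa using hc
  have hre : |2 * c.re / ρ| ≤ 1 := by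
    rw [abs_div, abs_mul, abs_two, abs_of_pos hρ, div_le_one hρ]
    linarith [Complex.abs_re_le_norm c]
  have him : |2 * c.im / ρ| ≤ 1 := by
    rw [abs_div, abs_mul, abs_two, abs_of_pos hρ, div_le_one hρ]
    linarith [Complex.abs_im_le_norm c]
  have h := hT (hseg _ h1 h2 _ hre) (hseg _ h3 (by simpa using h4) _ him)
    (a := 1 / 2) (b := 1 / 2) (by norm_num) (by norm_num) (by norm_num)
  convert h using 1
  apply Complex.ext <;> simp <;> field_simp

section Disc

variable {V : Type*} [NormedAddCommGroup V] [NormedSpace ℂ V]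

theorem exists_complex_disc_of_cross {S : Set V} (hS : Convex ℝ S) {x v : V} (hv : v ≠ 0)
    (h1 : x + v ∈ S) (h2 : x - v ∈ S) (h3 : x + Complex.I • v ∈ S)
    (h4 : x - Complex.I • v ∈ S) :
    ∃ C ⊆ S, Convex ℝ C ∧
      (∃ p w : V, w ≠ 0 ∧ (affineSpan ℝ C : Set V) = {y | ∃ c : ℂ, y = p + c • w}) ∧
      x ∈ intrinsicInterior ℝ C := by
  have hv' : 0 < ‖v‖ := norm_pos_iff.mpr hv
  set w : V := ((‖v‖⁻¹ : ℝ) : ℂ) • v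
  have hw : ‖w‖ = 1 := by simp [w, norm_smul, hv'.ne']
  have hvw : v = (‖v‖ : ℂ) • w := by simp [w, smul_smul, hv'.ne']
  let L : ℂ →ₗᵢ[ℝ] V :=
    { toLinearMap := (LinearMap.toSpanSingleton ℂ V w).restrictScalars ℝ
      norm_map' := fun c => by simp [norm_smul, hw] }
  let φ : ℂ →ᵃⁱ[ℝ] V :=
    (AffineIsometryEquiv.constVAdd ℝ V x).toAffineIsometry.comp L.toAffineIsometry
  have hφ : ∀ c, φ c = x + c • w := fun c => by simp [φ, L]
  have hball : ball (0 : ℂ) (‖v‖ / 2) ⊆ φ ⁻¹' S := by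
    refine Complex.ball_subset_of_convex (hS.affine_preimage φ.toAffineMap) hv' ?_ ?_ ?_ ?_ <;>
      simp only [mem_preimage, AffineIsometry.coe_toAffineMap, hφ]
    · rwa [← hvw]
    · rwa [neg_smul, ← hvw, ← sub_eq_add_neg]
    · rwa [mul_comm, mul_smul, ← hvw]
    · rwa [neg_smul, mul_comm, mul_smul, ← hvw, ← sub_eq_add_neg]
  refine ⟨φ '' ball 0 (‖v‖ / 2), image_subset_iff.mpr hball,
    (convex_ball 0 _).affine_image φ.toAffineMap,
    ⟨x, w, norm_ne_zero_iff.mp (hw ▸ one_ne_zero), ?_⟩, ?_⟩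
  · rw [show ⇑φ = ⇑φ.toAffineMap from rfl, ← AffineSubspace.map_span,
      isOpen_ball.affineSpan_eq_top ⟨0, by simpa using hv'⟩]
    ext y
    simp [hφ, eq_comm]
  · rw [φ.intrinsicInterior_image]
    refine ⟨0, interior_subset_intrinsicInterior ?_, by simp [hφ]⟩
    rw [isOpen_ball.interior_eq]
    exact mem_ball_self (by positivity)

end Disc

theorem min_principle_maximal_psh_general {n : ℕ} (D : Set (EuclideanSpace ℂ (Fin n)))
    (hD_open : IsOpen D)
    (u : EuclideanSpace ℂ (Fin n) → ℝ)
    (hu_cont : ContinuousOn u D)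
    (hu_nonneg : ∀ z ∈ D, 0 ≤ u z) (hu_max : IsMaximalPshOn D u)
    (hZ_conv : Convex ℝ {z ∈ D | u z = 0}) :
    ∀ x ∈ {z ∈ D | u z = 0},
      ∃ C : Set (EuclideanSpace ℂ (Fin n)), C ⊆ {z ∈ D | u z = 0} ∧ Convex ℝ C ∧
        (∃ (p v : EuclideanSpace ℂ (Fin n)), v ≠ 0 ∧
          (affineSpan ℝ C : Set (EuclideanSpace ℂ (Fin n))) =
            {w | ∃ c : ℂ, w = p + c • v}) ∧
        x ∈ intrinsicInterior ℝ C := by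
  intro x hx
  set Z := {z ∈ D | u z = 0}
  by_cases hcross : ∃ v ≠ 0, x + v ∈ Z ∧ x - v ∈ Z ∧ x + Complex.I • v ∈ Z ∧ x - Complex.I • v ∈ Z
  · obtain ⟨v, hv, h1, h2, h3, h4⟩ := hcross
    exact exists_complex_disc_of_cross hZ_conv hv h1 h2 h3 h4
  exfalso
  obtain ⟨r, hr, hrD⟩ := nhds_basis_closedBall.mem_iff.mp (hD_open.mem_nhds hx.1)
  have hsD : sphere x r ⊆ D := sphere_subset_closedBall.trans hrD
  have hZr : IsCompact (Z ∩ closedBall x r) := by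
    have hZball : Z ∩ closedBall x r = closedBall x r ∩ u ⁻¹' {0} := by
      ext z
      exact ⟨fun ⟨⟨_, hz⟩, hzr⟩ => ⟨hzr, hz⟩, fun ⟨hzr, hz⟩ => ⟨⟨hrD hzr, hz⟩, hzr⟩⟩
    refine (isCompact_closedBall x r).of_isClosed_subset ?_ inter_subset_right
    exact hZball ▸ (hu_cont.mono hrD).preimage_isClosed_of_isClosed isClosed_closedBall
      isClosed_singleton
  obtain ⟨F, hF, hFx, hFneg⟩ := exists_holomorphic_barrier_at hZ_conv hx hr hZr
    fun v h1 h2 h3 h4 => of_not_not fun hv => hcross ⟨v, hv, h1, h2, h3, h4⟩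
  exact (hu_max.pos_of_re_neg hr hrD (hu_cont.mono hsD)
    (fun z hz => hu_nonneg z (hsD hz)) hF hFx fun z hz hz0 => hFneg z ⟨⟨hsD hz, hz0⟩, hz⟩).ne' hx.2

/-- **Theorem (minimum principle for maximal psh functions).**
If `u ≥ 0` is a continuous maximal plurisubharmonic function on a domain `D ⊆ ℂⁿ`
whose zero set is nonempty and convex, then every point of the zero set lies in the
relative interior of a complex one-dimensional convex set contained in the zero set. -/
theorem min_principle_maximal_psh {n : ℕ} (D : Set (EuclideanSpace ℂ (Fin n)))
    (hD_open : IsOpen D) (hD_conn : IsConnected D)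
    (u : EuclideanSpace ℂ (Fin n) → ℝ)
    (hu_cont : ContinuousOn u D) (hu_psh : IsPshOn D u)
    (hu_nonneg : ∀ z ∈ D, 0 ≤ u z) (hu_max : IsMaximalPshOn D u)
    (hZ_ne : {z ∈ D | u z = 0}.Nonempty) (hZ_conv : Convex ℝ {z ∈ D | u z = 0}) :
    ∀ x ∈ {z ∈ D | u z = 0},
      ∃ C : Set (EuclideanSpace ℂ (Fin n)), C ⊆ {z ∈ D | u z = 0} ∧ Convex ℝ C ∧
        (∃ (p v : EuclideanSpace ℂ (Fin n)), v ≠ 0 ∧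
          (affineSpan ℝ C : Set (EuclideanSpace ℂ (Fin n))) =
            {w | ∃ c : ℂ, w = p + c • v}) ∧
        x ∈ intrinsicInterior ℝ C :=
  min_principle_maximal_psh_general D hD_open u hu_cont hu_nonneg hu_max hZ_conv
end
end

section
/- Let μ be a Borel probability measure with compact support on a finite-dimensional real normed vector space E, and let x ∈ E satisfy L(x) = ∫ L dμ for every continuous linear functional L : E → ℝ (i.e., x is the barycenter of μ). Then x lies in the relative interior (intrinsic interior) of the convex hull of the support of μ. -/
open MeasureTheory

noncomputable section

/-- The support of a Borel measure: the smallest closed set of full measure,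
i.e. the set of points all of whose neighborhoods have positive measure. -/
def measureSupport {E : Type*} [TopologicalSpace E] [MeasurableSpace E]
    (μ : Measure E) : Set E :=
  {x | ∀ U ∈ nhds x, μ U ≠ 0}

/-! The barycenter `x` is the integral of the identity, so it lies in the closed convex hull of the
support and hence in its affine span. If a continuous functional `L` attains its maximum over the
support at `x`, then `L x - L` is a nonnegative continuous function with integral zero, so it
vanishes on the support: no hyperplane through `x` supports the convex hull without containing it.
In the direction of the affine span, where the hull has nonempty interior, Hahn–Banach separation
turns this into membership of `x` in the interior. -/

theorem measureSupport_eq_support {X : Type*} [TopologicalSpace X] [MeasurableSpace X]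
    (μ : Measure X) : measureSupport μ = μ.support := by
  ext x
  simp [measureSupport, Measure.mem_support_iff_forall, pos_iff_ne_zero]

theorem Continuous.eqOn_support_of_integral_eq_zero {X : Type*} [TopologicalSpace X]
    [MeasurableSpace X] {μ : Measure X} {f : X → ℝ} (hf : Continuous f)
    (hint : Integrable f μ) (hnonneg : 0 ≤ᵐ[μ] f) (hzero : ∫ y, f y ∂μ = 0) :
    Set.EqOn f 0 μ.support := by
  have hnull : μ {y | f y ≠ 0} = 0 :=
    ae_iff.1 ((integral_eq_zero_iff_of_nonneg_ae hnonneg hint).1 hzero)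
  intro y hy
  by_contra hne
  exact Measure.subset_compl_support_of_isOpen (isOpen_ne_fun hf continuous_const) hnull hne hy

theorem Convex.mem_interior_of_forall_le_imp_eq {E : Type*} [TopologicalSpace E]
    [AddCommGroup E] [Module ℝ E] [IsTopologicalAddGroup E] [ContinuousSMul ℝ E]
    {A : Set E} (hA : Convex ℝ A) (hAint : (interior A).Nonempty) {x : E}
    (h : ∀ f : StrongDual ℝ E, (∀ a ∈ A, f a ≤ f x) → ∀ a ∈ A, f a = f x) :
    x ∈ interior A := by
  by_contra hx
  obtain ⟨f, hf, hfx⟩ := geometric_hahn_banach_of_nonempty_interior_point hA hx hAint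
  have himage : f '' interior A = {f x} :=
    (hAint.image f).subset_singleton_iff.1 <| Set.image_subset_iff.2 fun a ha =>
      h f hfx a (interior_subset ha)
  exact not_isOpen_singleton (f x) (himage ▸ f.isOpenMap_of_ne_zero hf _ isOpen_interior)

theorem Convex.mem_intrinsicInterior_of_forall_le_imp_eq {E : Type*} [NormedAddCommGroup E]
    [NormedSpace ℝ E] [FiniteDimensional ℝ E] {A : Set E} (hA : Convex ℝ A) {x : E}
    (hx : x ∈ affineSpan ℝ A)
    (h : ∀ f : StrongDual ℝ E, (∀ a ∈ A, f a ≤ f x) → ∀ a ∈ A, f a = f x) :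
    x ∈ intrinsicInterior ℝ A := by
  set P := affineSpan ℝ A
  have : Nonempty P := ⟨⟨x, hx⟩⟩
  have : Nonempty A := ((affineSpan_nonempty ℝ).1 ⟨x, hx⟩).to_subtype
  let ψ : P.direction →ᵃⁱ[ℝ] E :=
    P.subtypeₐᵢ.comp (AffineIsometryEquiv.vaddConst ℝ (⟨x, hx⟩ : P)).toAffineIsometry
  have hψ : ∀ v, ψ v = v + x := fun v => rfl
  have hψT : ψ '' (ψ ⁻¹' A) = A := by
    refine Set.image_preimage_eq_of_subset fun a ha => ⟨⟨a - x, ?_⟩, by simp [hψ]⟩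
    exact P.vsub_mem_direction (subset_affineSpan ℝ A ha) hx
  have hTspan : affineSpan ℝ (ψ ⁻¹' A) = ⊤ := by
    rw [show ψ ⁻¹' A = (AffineEquiv.vaddConst ℝ (⟨x, hx⟩ : P)) ⁻¹' (((↑) : P → E) ⁻¹' A) from rfl,
      ← AffineSubspace.comap_span, affineSpan_coe_preimage_eq_top, AffineSubspace.comap_top]
  have hTconv : Convex ℝ (ψ ⁻¹' A) := hA.affine_preimage ψ.toAffineMap
  have h0 : (0 : P.direction) ∈ interior (ψ ⁻¹' A) := by
    refine hTconv.mem_interior_of_forall_le_imp_eq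
      (hTconv.interior_nonempty_iff_affineSpan_eq_top.2 hTspan) fun L hL => ?_
    obtain ⟨g, hg, -⟩ := exists_extension_norm_eq P.direction L
    have hgψ : ∀ v, g (ψ v) = L v + g x := by simp [hψ, hg]
    have hgA : ∀ a ∈ A, g a ≤ g x := by
      rw [← hψT]
      rintro _ ⟨v, hv, rfl⟩
      linarith [hgψ v, hL v hv, L.map_zero]
    intro v hv
    linarith [hgψ v, h g hgA (ψ v) hv, L.map_zero]
  rw [← hψT, AffineIsometry.intrinsicInterior_image]
  exact ⟨0, interior_subset_intrinsicInterior h0, by simp [hψ]⟩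

/-- A point which is the barycenter of a compactly supported Borel probability
measure `μ` on a finite-dimensional real normed vector space lies in the relative
(intrinsic) interior of the convex hull of the support of `μ`. -/
theorem barycenter_mem_intrinsicInterior_convexHull_support
    {E : Type*} [NormedAddCommGroup E] [NormedSpace ℝ E] [FiniteDimensional ℝ E]
    [MeasurableSpace E] [BorelSpace E]
    (μ : Measure E) [IsProbabilityMeasure μ] (hsupp : IsCompact (measureSupport μ))
    (x : E) (hbary : ∀ L : E →L[ℝ] ℝ, L x = ∫ w, L w ∂μ) :
    x ∈ intrinsicInterior ℝ (convexHull ℝ (measureSupport μ)) := by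
  rw [measureSupport_eq_support] at hsupp ⊢
  have hae : ∀ᵐ w ∂μ, w ∈ μ.support := μ.support_mem_ae
  obtain ⟨C, hC⟩ := isBounded_iff_forall_norm_le.1 hsupp.isBounded
  have hint : Integrable id μ := .of_bound aestronglyMeasurable_id C (hae.mono hC)
  have hx_eq : x = ∫ w, w ∂μ :=
    SeparatingDual.eq_iff_forall_dual_eq.2 fun L => (hbary L).trans (L.integral_comp_comm hint)
  have hx_closure : x ∈ closure (convexHull ℝ μ.support) :=
    hx_eq ▸ (convex_convexHull ℝ μ.support).closure.integral_mem isClosed_closure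
      (hae.mono fun w hw => subset_closure (subset_convexHull ℝ μ.support hw)) hint
  refine (convex_convexHull ℝ μ.support).mem_intrinsicInterior_of_forall_le_imp_eq
    (closure_minimal (subset_affineSpan ℝ _) (AffineSubspace.closed_of_finiteDimensional _)
      hx_closure) fun L hL => ?_
  have hLint : Integrable (fun w => L w) μ := L.integrable_comp hint
  have hLS : Set.EqOn (fun w => L x - L w) 0 μ.support := by
    refine (continuous_const.sub L.continuous).eqOn_support_of_integral_eq_zero
      (f := fun w => L x - L w) ((integrable_const _).sub hLint)
      (hae.mono fun w hw => sub_nonneg.2 (hL w (subset_convexHull ℝ μ.support hw))) ?_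
    rw [integral_sub (integrable_const _) hLint, integral_const, ← hbary]
    simp
  exact convexHull_min (fun w hw => (sub_eq_zero.1 (hLS hw)).symm)
    (convex_hyperplane L.isLinear (L x))
end
end

section
/- Let n ≥ 1, r > 0, and let P̄ = {z ∈ ℂⁿ : |z_i| ≤ r for all i} be the closed polydisk of radius r. For z ∈ P̄ and k ∈ {0, 1, …, n}, the point z is a complex k-extreme point of P̄ if and only if the number of indices i with |z_i| < r equals k. -/
/-! If `z` is in the relative interior of a convex set `S` inside the polydisk, every direction
`v` of `S` can be followed both ways from `z`, so `z i ± t v i` stay in the closed disk of radius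
`r` for small `t`; strict convexity of the disk forces `v i = 0` wherever `‖z i‖ = r`. Thus the
complex dimension of `S` is at most the number of coordinates with `‖z i‖ < r`. Conversely, for any
set `J` of such coordinates, the slice of the polydisk through `z` obtained by freeing exactly the
coordinates in `J` contains a relative neighbourhood of `z` in `z + ℂ^J`, so it is a complex
`#J`-dimensional convex set with `z` in its relative interior. -/

noncomputable section

/-- `C` is a complex `m`-dimensional convex set: a convex set whose real affine hull
is a translate of a complex linear subspace of complex dimension `m`. -/
def IsComplexConvexDim {E : Type*} [NormedAddCommGroup E] [NormedSpace ℂ E]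
    (m : ℕ) (C : Set E) : Prop :=
  Convex ℝ C ∧ ∃ (p : E) (V : Submodule ℂ E), Module.finrank ℂ V = m ∧
    (affineSpan ℝ C : Set E) = (p + ·) '' (V : Set E)

/-- `z` is a complex `k`-extreme point of the convex set `C`: it lies in the relative
interior of a complex `k`-dimensional convex subset of `C`, but not in the relative
interior of any complex `(k+1)`-dimensional convex subset of `C`. -/
def IsComplexKExtremePoint {E : Type*} [NormedAddCommGroup E] [NormedSpace ℂ E]
    (k : ℕ) (C : Set E) (z : E) : Prop :=
  (∃ S : Set E, S ⊆ C ∧ IsComplexConvexDim k S ∧ z ∈ intrinsicInterior ℝ S) ∧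
  ¬ ∃ S : Set E, S ⊆ C ∧ IsComplexConvexDim (k + 1) S ∧ z ∈ intrinsicInterior ℝ S

open Module Filter Topology

section CoordinateSubspace

variable {𝕜 ι : Type*} [Field 𝕜] [Fintype ι]

def coordSubspace (s : Set ι) : Submodule 𝕜 (EuclideanSpace 𝕜 ι) :=
  Submodule.span 𝕜 (PiLp.basisFun 2 𝕜 ι '' s)

theorem mem_coordSubspace {s : Set ι} {v : EuclideanSpace 𝕜 ι} :
    v ∈ coordSubspace s ↔ ∀ i ∉ s, v i = 0 := by
  simp [coordSubspace, Basis.mem_span_image, Set.subset_def, not_imp_comm]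

theorem finrank_coordSubspace (s : Finset ι) :
    finrank 𝕜 (coordSubspace (𝕜 := 𝕜) (s : Set ι)) = s.card := by
  rw [coordSubspace, Set.image_eq_range, ← Fintype.card_coe]
  exact finrank_span_eq_card ((PiLp.basisFun 2 𝕜 ι).linearIndependent.comp _ Subtype.val_injective)

end CoordinateSubspace

theorem AffineSubspace.coe_mk'_eq_image_add {k E : Type*} [Ring k] [AddCommGroup E] [Module k E]
    (p : E) (W : Submodule k E) : (AffineSubspace.mk' p W : Set E) = (p + ·) '' W := by
  ext q
  simp [AffineSubspace.mem_mk', vsub_eq_sub, neg_add_eq_sub]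

theorem Filter.Eventually.exists_ne_zero {p : ℝ → Prop} (h : ∀ᶠ t in 𝓝 0, p t) :
    ∃ t ≠ 0, p t :=
  ((h.filter_mono nhdsWithin_le_nhds).and (self_mem_nhdsWithin (a := 0) (s := {0}ᶜ))).exists.imp
    fun _ h => ⟨h.2, h.1⟩

section RelativelyOpen

variable {E : Type*} [AddCommGroup E] [Module ℝ E] [TopologicalSpace E] {S U : Set E}
  {A : AffineSubspace ℝ E} {z : E}

theorem mem_intrinsicInterior_of_inter_isOpen_subset (hSA : S ⊆ A) (hU : IsOpen U) (hzU : z ∈ U)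
    (hzA : z ∈ A) (hAU : (A : Set E) ∩ U ⊆ S) : z ∈ intrinsicInterior ℝ S := by
  refine mem_intrinsicInterior.2 ⟨⟨z, subset_affineSpan ℝ S (hAU ⟨hzA, hzU⟩)⟩, ?_, rfl⟩
  exact interior_maximal (fun (w : affineSpan ℝ S) hw => hAU ⟨affineSpan_le.2 hSA w.2, hw⟩)
    (hU.preimage continuous_subtype_val) hzU

variable [ContinuousAdd E] [ContinuousSMul ℝ E]

theorem affineSpan_eq_of_inter_isOpen_subset (hSA : S ⊆ A) (hU : IsOpen U) (hzU : z ∈ U)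
    (hzA : z ∈ A) (hAU : (A : Set E) ∩ U ⊆ S) : affineSpan ℝ S = A := by
  refine le_antisymm (affineSpan_le.2 hSA) fun q hq => ?_
  have hv : q -ᵥ z ∈ A.direction := AffineSubspace.vsub_mem_direction hq hzA
  have hnear : ∀ᶠ t in 𝓝 (0 : ℝ), z + t • (q -ᵥ z) ∈ U :=
    (Continuous.tendsto' (by fun_prop) 0 z (by simp)).eventually (hU.mem_nhds hzU)
  obtain ⟨t, ht0, htU⟩ := hnear.exists_ne_zero
  have htS : z + t • (q -ᵥ z) ∈ affineSpan ℝ S := by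
    refine subset_affineSpan ℝ S (hAU ⟨?_, htU⟩)
    simpa [add_comm] using AffineSubspace.vadd_mem_of_mem_direction (A.direction.smul_mem t hv) hzA
  have hzS : z ∈ affineSpan ℝ S := subset_affineSpan ℝ S (hAU ⟨hzA, hzU⟩)
  simpa [smul_smul, ht0] using (affineSpan ℝ S).smul_vsub_vadd_mem t⁻¹ htS hzS hzS

theorem eventually_add_smul_mem_of_mem_intrinsicInterior {v : E}
    (hz : z ∈ intrinsicInterior ℝ S) (hv : v ∈ (affineSpan ℝ S).direction) :
    ∀ᶠ t in 𝓝 (0 : ℝ), z + t • v ∈ S := by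
  obtain ⟨y, hy, rfl⟩ := mem_intrinsicInterior.mp hz
  let f : ℝ → affineSpan ℝ S := fun t =>
    ⟨t • v +ᵥ (y : E), AffineSubspace.vadd_mem_of_mem_direction (Submodule.smul_mem _ t hv) y.2⟩
  have hf : Continuous f := by fun_prop
  have hf0 : f 0 = y := by ext; simp [f]
  filter_upwards [hf.continuousAt.preimage_mem_nhds (hf0 ▸ isOpen_interior.mem_nhds hy)]
    with t ht
  simpa [f, add_comm] using interior_subset ht

end RelativelyOpen

theorem eq_zero_of_norm_add_le_of_norm_sub_le {F : Type*} [NormedAddCommGroup F]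
    [InnerProductSpace ℝ F] {x y : F} {r : ℝ} (hx : r ≤ ‖x‖) (h₁ : ‖x + y‖ ≤ r)
    (h₂ : ‖x - y‖ ≤ r) : y = 0 := by
  have hpar := parallelogram_law_with_norm ℝ x y
  have : ‖y‖ ^ 2 ≤ 0 := by nlinarith [norm_nonneg (x + y), norm_nonneg (x - y), norm_nonneg x]
  exact norm_eq_zero.1 (by nlinarith [norm_nonneg y])

section ComplexConvexDim

variable {E : Type*} [NormedAddCommGroup E] [NormedSpace ℂ E] {C : Set E} {z : E}

theorem IsComplexConvexDim.exists_direction_eq {m : ℕ} (h : IsComplexConvexDim m C) :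
    ∃ V : Submodule ℂ E, finrank ℂ V = m ∧ (affineSpan ℝ C).direction = V.restrictScalars ℝ := by
  obtain ⟨-, p, V, hV, hspan⟩ := h
  refine ⟨V, hV, ?_⟩
  have : affineSpan ℝ C = AffineSubspace.mk' p (V.restrictScalars ℝ) :=
    SetLike.coe_injective (hspan.trans (AffineSubspace.coe_mk'_eq_image_add _ _).symm)
  rw [this, AffineSubspace.direction_mk']

theorem isComplexConvexDim_finrank (hC : Convex ℝ C) {p : E} {V : Submodule ℂ E}
    (h : affineSpan ℝ C = AffineSubspace.mk' p (V.restrictScalars ℝ)) :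
    IsComplexConvexDim (finrank ℂ V) C :=
  ⟨hC, p, V, rfl, by rw [h, AffineSubspace.coe_mk'_eq_image_add]; rfl⟩

theorem isComplexKExtremePoint_iff_eq {N k : ℕ}
    (h : ∀ d, (∃ S ⊆ C, IsComplexConvexDim d S ∧ z ∈ intrinsicInterior ℝ S) ↔ d ≤ N) :
    IsComplexKExtremePoint k C z ↔ N = k := by
  rw [IsComplexKExtremePoint, h, h]
  omega

end ComplexConvexDim

section Polydisk

variable {ι : Type*}

def closedPolydisk (r : ℝ) : Set (EuclideanSpace ℂ ι) := {w | ∀ i, ‖w i‖ ≤ r}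

theorem convex_closedPolydisk (r : ℝ) : Convex ℝ (closedPolydisk (ι := ι) r) := by
  simp only [closedPolydisk, Set.ofPred_forall]
  refine convex_iInter fun i => ?_
  simpa [Set.preimage, mem_closedBall_zero_iff] using (convex_closedBall (0 : ℂ) r).linear_preimage
    ((EuclideanSpace.projₗ (𝕜 := ℂ) i).restrictScalars ℝ)

variable [Fintype ι] {r : ℝ} {z : EuclideanSpace ℂ ι} {S : Set (EuclideanSpace ℂ ι)}

theorem coord_eq_zero_of_mem_direction (hS : S ⊆ closedPolydisk r)
    (hz : z ∈ intrinsicInterior ℝ S) {v : EuclideanSpace ℂ ι} (hv : v ∈ (affineSpan ℝ S).direction)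
    {i : ι} (hi : r ≤ ‖z i‖) : v i = 0 := by
  have hpos := eventually_add_smul_mem_of_mem_intrinsicInterior hz hv
  have hneg : ∀ᶠ t in 𝓝 (0 : ℝ), z + (-t) • v ∈ S :=
    (Continuous.tendsto' continuous_neg 0 0 neg_zero).eventually hpos
  obtain ⟨t, ht0, htpos, htneg⟩ := (hpos.and hneg).exists_ne_zero
  have : t • v i = 0 := eq_zero_of_norm_add_le_of_norm_sub_le hi (hS htpos i)
    (by simpa [neg_smul, ← sub_eq_add_neg] using hS htneg i)
  exact (smul_eq_zero.1 this).resolve_left ht0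

theorem le_card_of_isComplexConvexDim {d : ℕ} (hS : S ⊆ closedPolydisk r)
    (hdim : IsComplexConvexDim d S) (hz : z ∈ intrinsicInterior ℝ S) :
    d ≤ (Finset.univ.filter fun i => ‖z i‖ < r).card := by
  obtain ⟨V, rfl, hV⟩ := hdim.exists_direction_eq
  have hle : V ≤ coordSubspace ↑(Finset.univ.filter fun i => ‖z i‖ < r) := fun v hv =>
    mem_coordSubspace.2 fun i hi => coord_eq_zero_of_mem_direction hS hz
      (hV ▸ show v ∈ V.restrictScalars ℝ from hv) (by simpa using hi)
  exact (Submodule.finrank_mono hle).trans_eq (finrank_coordSubspace _)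

theorem exists_isComplexConvexDim_card (hz : z ∈ closedPolydisk r) (J : Finset ι)
    (hJ : ∀ i ∈ J, ‖z i‖ < r) :
    ∃ S ⊆ closedPolydisk r, IsComplexConvexDim J.card S ∧ z ∈ intrinsicInterior ℝ S := by
  set A := AffineSubspace.mk' z ((coordSubspace (J : Set ι)).restrictScalars ℝ)
  set U : Set (EuclideanSpace ℂ ι) := ⋂ i ∈ J, {w | ‖w i‖ < r}
  have hU : IsOpen U := isOpen_biInter_finset fun i _ => isOpen_lt (by fun_prop) continuous_const
  have hzU : z ∈ U := Set.mem_iInter₂.2 hJ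
  have hzA : z ∈ A := AffineSubspace.self_mem_mk' _ _
  have hAU : (A : Set _) ∩ U ⊆ closedPolydisk r ∩ A := by
    rintro w ⟨hwA, hwU⟩
    refine ⟨fun i => ?_, hwA⟩
    by_cases hi : i ∈ J
    · exact (Set.mem_iInter₂.1 hwU i hi).le
    · have : w i - z i = 0 := mem_coordSubspace.1 (AffineSubspace.mem_mk'.1 hwA) i hi
      rw [sub_eq_zero.1 this]
      exact hz i
  refine ⟨closedPolydisk r ∩ A, Set.inter_subset_left, ?_, ?_⟩
  · rw [← finrank_coordSubspace (𝕜 := ℂ)]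
    exact isComplexConvexDim_finrank ((convex_closedPolydisk r).inter A.convex)
      (affineSpan_eq_of_inter_isOpen_subset Set.inter_subset_right hU hzU hzA hAU)
  · exact mem_intrinsicInterior_of_inter_isOpen_subset Set.inter_subset_right hU hzU hzA hAU

end Polydisk

theorem polydisk_complex_extreme_points_general {n : ℕ} (r : ℝ)
    (z : EuclideanSpace ℂ (Fin n)) (hz : ∀ i, ‖z i‖ ≤ r) (k : ℕ) :
    IsComplexKExtremePoint k {w : EuclideanSpace ℂ (Fin n) | ∀ i, ‖w i‖ ≤ r} z ↔
      (Finset.univ.filter fun i => ‖z i‖ < r).card = k := by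
  refine isComplexKExtremePoint_iff_eq fun d => ⟨fun ⟨S, hS, hdim, hzS⟩ =>
    le_card_of_isComplexConvexDim hS hdim hzS, fun hd => ?_⟩
  obtain ⟨J, hJ, rfl⟩ := Finset.exists_subset_card_eq hd
  exact exists_isComplexConvexDim_card hz J fun i hi => (Finset.mem_filter.1 (hJ hi)).2

/-- A point `z` of the closed polydisk of radius `r` in `ℂⁿ` is a complex `k`-extreme
point of the polydisk iff exactly `k` of its coordinates satisfy `|z i| < r`. -/
theorem polydisk_complex_extreme_points {n : ℕ} (hn : 1 ≤ n) (r : ℝ) (hr : 0 < r)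
    (z : EuclideanSpace ℂ (Fin n)) (hz : ∀ i, ‖z i‖ ≤ r) (k : ℕ) (hk : k ≤ n) :
    IsComplexKExtremePoint k {w : EuclideanSpace ℂ (Fin n) | ∀ i, ‖w i‖ ≤ r} z ↔
      (Finset.univ.filter fun i => ‖z i‖ < r).card = k :=
  polydisk_complex_extreme_points_general r z hz k
end
end
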